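/- If u is a bispecial f-smooth word over {a,b} whose canonical run-length factorization has at least two blocks (u is 'long'), then the first and last exponents of u both equal a; moreover u = P_{f,u₁}(D_f(u)) and D_f(u) is also bispecial with the same multiplicity m(D_f(u)) = m(u). -/

import Mathlib

namespace SmoothWords

/-- Complement of a letter over the alphabet `{a, b}`. -/
def flip (a b c : ℕ) : ℕ := if c = a then b else a

/-- Run-length encoding of a finite word: list of (letter, exponent) pairs. -/
def runs : List ℕ → List (ℕ × ℕ)
  | [] => []
  | c :: t =>
    match runs t with
    | [] => [(c, 1)]
    | (d, k) :: r => if c = d then (c, k + 1) :: r else (c, 1) :: (d, k) :: r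

/-- The exponents of the canonical run-length factorization. -/
def exps (u : List ℕ) : List ℕ := (runs u).map Prod.snd

/-- Boundary cut used by the finite derivatives. -/
def cut (a b p : ℕ) : List ℕ := if p ≤ a then [] else [b]

/-- The finite derivative `D_f`. -/
def Df (a b : ℕ) (u : List ℕ) : List ℕ :=
  match exps u with
  | [] => []
  | [p] => cut a b p
  | p :: q :: rest =>
      cut a b p ++ (q :: rest).dropLast ++ cut a b ((q :: rest).getLast (List.cons_ne_nil _ _))

/-- `u` is f-derivable: letters in `{a,b}`, inner run exponents in `{a,b}`,
boundary run exponents in `[1, b]`. -/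
def Cf1 (a b : ℕ) (u : List ℕ) : Prop :=
  (∀ c ∈ u, c = a ∨ c = b) ∧
  (∀ p ∈ exps u, p ≤ b) ∧
  (∀ p ∈ ((exps u).drop 1).dropLast, p = a ∨ p = b)

/-- `u` is f-smooth: all iterated finite derivatives are f-derivable
(equivalently, some iterate is `ε`). -/
def FSmooth (a b : ℕ) (u : List ℕ) : Prop := ∀ n, Cf1 a b ((Df a b)^[n] u)

/-- The r-derivative `D_r`: keeps all exponents but cuts the last one. -/
def Dr (a b : ℕ) (u : List ℕ) : List ℕ :=
  match exps u with
  | [] => []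
  | p :: rest =>
      (p :: rest).dropLast ++ cut a b ((p :: rest).getLast (List.cons_ne_nil _ _))

/-- `u` is r-derivable. -/
def Cr1 (a b : ℕ) (u : List ℕ) : Prop :=
  (∀ c ∈ u, c = a ∨ c = b) ∧
  (∀ p ∈ exps u, p ≤ b) ∧
  (∀ p ∈ (exps u).dropLast, p = a ∨ p = b)

/-- `u` is r-smooth. -/
def RSmooth (a b : ℕ) (u : List ℕ) : Prop := ∀ n, Cr1 a b ((Dr a b)^[n] u)

/-- `y` is the derivative of the infinite word `x`: `x = x₀^{y₀} x̄₀^{y₁} x₀^{y₂} ⋯`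
with all `y i ∈ {a, b}` (in particular `x` is derivable). -/
def DerivesTo (a b : ℕ) (x y : ℕ → ℕ) : Prop :=
  (∀ i, y i = a ∨ y i = b) ∧
  ∃ S : ℕ → ℕ, S 0 = 0 ∧ (∀ k, S (k + 1) = S k + y k) ∧
    ∀ k i, S k ≤ i → i < S (k + 1) → x i = (flip a b)^[k] (x 0)

/-- An infinite word over `{a,b}` is smooth if it is infinitely derivable. -/
def Smooth (a b : ℕ) (x : ℕ → ℕ) : Prop :=
  (∀ i, x i = a ∨ x i = b) ∧
  ∃ X : ℕ → ℕ → ℕ, X 0 = x ∧ ∀ n, DerivesTo a b (X n) (X (n + 1))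

/-- Auxiliary for the f-primitives: alternate blocks with given exponents,
ending with a block of exponent `a`. -/
def pfAux (a b : ℕ) : ℕ → List ℕ → List ℕ
  | c, [] => List.replicate a c
  | c, p :: t => List.replicate p c ++ pfAux a b (flip a b c) t

/-- The f-primitive `P_{f,c}`. -/
def Pf (a b c : ℕ) (u : List ℕ) : List ℕ :=
  if c = a then List.replicate a a ++ pfAux a b b u
  else (List.replicate a a ++ pfAux a b b u).map (flip a b)

/-- `u` is a bispecial f-smooth word. -/
def Bispecial (a b : ℕ) (u : List ℕ) : Prop :=
  FSmooth a b u ∧ FSmooth a b (a :: u) ∧ FSmooth a b (b :: u) ∧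
    FSmooth a b (u ++ [a]) ∧ FSmooth a b (u ++ [b])

open Classical in
/-- The multiplicity `m(u) = |{aua,aub,bua,bub} ∩ C_f^∞| - 3`. -/
noncomputable def mult (a b : ℕ) (u : List ℕ) : ℤ :=
  (if FSmooth a b (a :: u ++ [a]) then 1 else 0) +
  (if FSmooth a b (a :: u ++ [b]) then 1 else 0) +
  (if FSmooth a b (b :: u ++ [a]) then 1 else 0) +
  (if FSmooth a b (b :: u ++ [b]) then 1 else 0) - 3

/-- The vertex of the tree `T` indexed by the path `s` from the root `ε`
(`false` = child by `P_{f,a}`, `true` = child by `P_{f,b}`). -/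
def node (a b : ℕ) : List Bool → List ℕ
  | [] => []
  | c :: s => Pf a b (if c then b else a) (node a b s)

/-- Total length `f(i) = ∑_{u ∈ T_i} |u|` of generation `i` of `T`. -/
def totalLen (a b i : ℕ) : ℕ :=
  ∑ s : Fin i → Bool, (node a b (List.ofFn s)).length

/-- Generation `i` of the tree `T`, as a finite set of words. -/
def genSet (a b i : ℕ) : Finset (List ℕ) :=
  (Finset.univ : Finset (Fin i → Bool)).image fun s => node a b (List.ofFn s)

/-- `b_i(n) = |T_i ∩ A^n|`. -/
def bfun (a b i n : ℕ) : ℕ := ((genSet a b i).filter fun u => u.length = n).card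

/-- `s_i(n) = ∑_{m<n} b_i(m)`. -/
def sfun (a b i n : ℕ) : ℕ := ∑ m ∈ Finset.range n, bfun a b i m

/-- `p_i(n) = ∑_{m<n} s_i(m)`. -/
def pfun (a b i n : ℕ) : ℕ := ∑ m ∈ Finset.range n, sfun a b i m

/-- `p(n) = ∑_i p_i(n)`. -/
noncomputable def pTot (a b n : ℕ) : ℝ := ∑' i : ℕ, (pfun a b i n : ℝ)

/-- `l_i`, the minimal length of a word of generation `i` of `T`. -/
noncomputable def li (a b i : ℕ) : ℕ :=
  sInf {m | ∃ s : Fin i → Bool, (node a b (List.ofFn s)).length = m}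

/-- `u` is a factor of the infinite word `x`. -/
def FactorOf (u : List ℕ) (x : ℕ → ℕ) : Prop :=
  ∃ i, u = (List.range u.length).map fun j => x (i + j)

/-!
A word over `{a, b}` is determined by its first letter `c` and its run exponents (`decode`).
If `u = c^p ⋯ d^q` is a long bispecial word, then `c u` and `c̄ u` start with runs `p + 1` and
`1, p`: f-derivability forces `p + 1 ≤ b` and `p ∈ {a, b}`, hence `p = a`, and symmetrically
`q = a`, so `u = P_{f,c}(m)` with `m = D_f(u)` the inner exponents. In each extension `x u y`
the derivative turns a boundary run `a + 1` into `b` and runs `1, a` into `a`, so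
`D_f(x u y) = σ(x) m τ(y)` for bijections `σ, τ` of `{a, b}`. Every `x u y` is f-derivable, so it
is f-smooth iff `σ(x) m τ(y)` is; this transports bispeciality and the multiplicity to `m`.
-/

section Letters

variable {a b c : ℕ}

@[simp] lemma flip_left : flip a b a = b := by simp [flip]

lemma flip_right (hab : a ≠ b) : flip a b b = a := by simp [flip, hab.symm]

lemma flip_eq_or (x : ℕ) : flip a b x = a ∨ flip a b x = b := by
  unfold flip; split_ifs <;> simp

lemma iterate_flip_eq_or (hc : c = a ∨ c = b) (n : ℕ) :
    (flip a b)^[n] c = a ∨ (flip a b)^[n] c = b := by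
  cases n with
  | zero => exact hc
  | succ n => rw [Function.iterate_succ_apply']; exact flip_eq_or _

lemma flip_ne_self (hab : a ≠ b) (hc : c = a ∨ c = b) : flip a b c ≠ c := by
  rcases hc with rfl | rfl
  · simpa using hab.symm
  · simpa [flip_right hab] using hab

lemma flip_flip_eq (hab : a ≠ b) (hc : c = a ∨ c = b) : flip a b (flip a b c) = c := by
  rcases hc with rfl | rfl <;> simp [flip_right hab]

lemma eq_flip_of_ne (hab : a ≠ b) {x : ℕ} (hx : x = a ∨ x = b) (hc : c = a ∨ c = b)
    (hxc : x ≠ c) : x = flip a b c := by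
  rcases hx with rfl | rfl <;> rcases hc with rfl | rfl <;> simp_all [flip_right]

lemma exists_ite_eq (hab : a ≠ b) (hc : c = a ∨ c = b) {z : ℕ} (hz : z = a ∨ z = b) :
    ∃ x, (x = a ∨ x = b) ∧ (if x = c then b else a) = z := by
  rcases hz with rfl | rfl
  · exact ⟨flip _ _ c, flip_eq_or c, if_neg (flip_ne_self hab hc)⟩
  · exact ⟨c, hc, if_pos rfl⟩

lemma ite_eq_swap_or_id (hab : a ≠ b) (hc : c = a ∨ c = b) :
    (if a = c then b else a) = b ∧ (if b = c then b else a) = a ∨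
      (if a = c then b else a) = a ∧ (if b = c then b else a) = b := by
  rcases hc with rfl | rfl <;> simp [hab, hab.symm]

end Letters

def decode (a b : ℕ) : ℕ → List ℕ → List ℕ
  | _, [] => []
  | c, p :: t => List.replicate p c ++ decode a b (flip a b c) t

section Decode

variable {a b c : ℕ}

@[simp] lemma decode_nil : decode a b c [] = [] := rfl

@[simp] lemma decode_cons (p : ℕ) (t : List ℕ) :
    decode a b c (p :: t) = List.replicate p c ++ decode a b (flip a b c) t := rfl

lemma decode_append (s t : List ℕ) :
    decode a b c (s ++ t) = decode a b c s ++ decode a b ((flip a b)^[s.length] c) t := by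
  induction s generalizing c with
  | nil => simp
  | cons p s ih => simp [ih]

lemma map_flip_decode (l : List ℕ) :
    (decode a b c l).map (flip a b) = decode a b (flip a b c) l := by
  induction l generalizing c with
  | nil => rfl
  | cons p t ih => simp [ih]

lemma mem_decode (hc : c = a ∨ c = b) {l : List ℕ} {x : ℕ} (hx : x ∈ decode a b c l) :
    x = a ∨ x = b := by
  induction l generalizing c with
  | nil => simp at hx
  | cons p t ih =>
    rcases List.mem_append.mp hx with hx | hx
    · rw [List.eq_of_mem_replicate hx]; exact hc
    · exact ih (flip_eq_or c) hx

lemma cons_decode (hab : a ≠ b) (hc : c = a ∨ c = b) {x : ℕ} (hx : x = a ∨ x = b)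
    (p : ℕ) (t : List ℕ) :
    x :: decode a b c (p :: t) =
      decode a b x (if x = c then (p + 1) :: t else 1 :: p :: t) := by
  split_ifs with hxc
  · subst hxc; simp [List.replicate_succ]
  · simp [eq_flip_of_ne hab hx hc hxc, flip_flip_eq hab hc]

lemma decode_append_singleton (hab : a ≠ b) (hc : c = a ∨ c = b) {y : ℕ} (hy : y = a ∨ y = b)
    (s : List ℕ) (q : ℕ) :
    decode a b c (s ++ [q]) ++ [y] =
      decode a b c (s ++ if y = (flip a b)^[s.length] c then [q + 1] else [q, 1]) := by
  rw [decode_append, decode_append]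
  split_ifs with hy'
  · simp [hy', List.replicate_succ']
  · simp [eq_flip_of_ne hab hy (iterate_flip_eq_or hc _) hy']

end Decode

section Runs

variable {a b c : ℕ}

lemma exists_runs_cons_eq (x : ℕ) (t : List ℕ) : ∃ k r, runs (x :: t) = (x, k) :: r := by
  unfold runs
  split
  · exact ⟨1, [], rfl⟩
  · split_ifs with h
    · exact ⟨_, _, by rw [h]⟩
    · exact ⟨1, _, rfl⟩

lemma runs_cons_of_eq {x d k : ℕ} {t : List ℕ} {r : List (ℕ × ℕ)} (h : runs t = (d, k) :: r) :
    runs (x :: t) = if x = d then (x, k + 1) :: r else (x, 1) :: (d, k) :: r := by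
  rw [runs, h]

lemma runs_replicate_append {p : ℕ} (hp : 1 ≤ p) {v : List ℕ} (hv : v.head? ≠ some c) :
    runs (List.replicate p c ++ v) = (c, p) :: runs v := by
  induction p, hp using Nat.le_induction with
  | base =>
    cases v with
    | nil => rfl
    | cons y s =>
      obtain ⟨k, r, h⟩ := exists_runs_cons_eq y s
      have hcy : c ≠ y := fun h => hv (by simp [h])
      simp [runs_cons_of_eq h, hcy, h]
  | succ p _ ih => rw [List.replicate_succ, List.cons_append, runs_cons_of_eq ih, if_pos rfl]

lemma exps_decode (hab : a ≠ b) (hc : c = a ∨ c = b) {l : List ℕ} (hl : ∀ p ∈ l, 1 ≤ p) :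
    exps (decode a b c l) = l := by
  induction l generalizing c with
  | nil => rfl
  | cons p t ih =>
    have hhead : (decode a b (flip a b c) t).head? ≠ some c := by
      cases t with
      | nil => simp
      | cons q t =>
        obtain ⟨q, rfl⟩ := Nat.exists_eq_add_of_le' (hl q (by simp))
        simpa [List.replicate_succ] using flip_ne_self hab hc
    rw [decode_cons, exps, runs_replicate_append (hl p (by simp)) hhead, List.map_cons, ← exps,
      ih (flip_eq_or c) fun q hq => hl q (by simp [hq])]

lemma exps_eq_nil {u : List ℕ} : exps u = [] ↔ u = [] := by
  cases u with
  | nil => simp [exps, runs]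
  | cons x t => obtain ⟨k, r, h⟩ := exists_runs_cons_eq x t; simp [exps, h]

lemma exps_cons {x : ℕ} {t : List ℕ} {k : ℕ} {rest : List ℕ} (ht : exps t = k :: rest) :
    exps (x :: t) = if x = t.headI then (k + 1) :: rest else 1 :: k :: rest := by
  cases t with
  | nil => simp [exps, runs] at ht
  | cons y s =>
    obtain ⟨k', r, h⟩ := exists_runs_cons_eq y s
    simp only [exps, h, List.map_cons, List.cons.injEq] at ht
    obtain ⟨rfl, rfl⟩ := ht
    rw [exps, runs_cons_of_eq h]
    split_ifs <;> simp_all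

lemma one_le_of_mem_exps {u : List ℕ} {p : ℕ} (hp : p ∈ exps u) : 1 ≤ p := by
  induction u generalizing p with
  | nil => simp [exps, runs] at hp
  | cons x t ih =>
    cases ht : exps t with
    | nil => obtain rfl := exps_eq_nil.mp ht; simp_all [exps, runs]
    | cons k rest =>
      have hk : 1 ≤ k := ih (by simp [ht])
      have hrest : ∀ q ∈ rest, 1 ≤ q := fun q hq => ih (by simp [ht, hq])
      rw [exps_cons ht] at hp
      split_ifs at hp <;> grind

lemma decode_headI_exps (hab : a ≠ b) {u : List ℕ} (hu : ∀ x ∈ u, x = a ∨ x = b) :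
    decode a b u.headI (exps u) = u := by
  induction u with
  | nil => rfl
  | cons x t ih =>
    cases ht : exps t with
    | nil => simp [exps_eq_nil.mp ht, exps, runs]
    | cons k rest =>
      have htne : t ≠ [] := by rintro rfl; simp [exps, runs] at ht
      have hth : t.headI = a ∨ t.headI = b := by
        cases t with
        | nil => exact absurd rfl htne
        | cons y s => exact hu y (by simp)
      rw [List.headI_cons, exps_cons ht, ← cons_decode hab hth (hu x (by simp)), ← ht,
        ih fun y hy => hu y (by simp [hy])]

end Runs

section Derivative

variable {a b c : ℕ}

lemma Cf1.headI_eq_or {u : List ℕ} (h : Cf1 a b u) (hu : u ≠ []) :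
    u.headI = a ∨ u.headI = b := by
  obtain ⟨x, t, rfl⟩ := List.exists_cons_of_ne_nil hu
  exact h.1 x (by simp)

lemma fsmooth_iff {w : List ℕ} : FSmooth a b w ↔ Cf1 a b w ∧ FSmooth a b (Df a b w) := by
  refine ⟨fun h => ⟨h 0, fun n => h (n + 1)⟩, fun ⟨h0, h⟩ n => ?_⟩
  cases n with
  | zero => exact h0
  | succ n => exact h n

lemma bispecial_iff {u : List ℕ} :
    Bispecial a b u ↔ FSmooth a b u ∧ (∀ x, x = a ∨ x = b → FSmooth a b (x :: u)) ∧
      ∀ y, y = a ∨ y = b → FSmooth a b (u ++ [y]) := by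
  constructor
  · rintro ⟨h, hla, hlb, hra, hrb⟩
    exact ⟨h, by rintro x (rfl | rfl) <;> assumption, by rintro y (rfl | rfl) <;> assumption⟩
  · rintro ⟨h, hl, hr⟩
    exact ⟨h, hl a (.inl rfl), hl b (.inr rfl), hr a (.inl rfl), hr b (.inr rfl)⟩

lemma mult_eq_of_fsmooth_iff {u v : List ℕ} {σ τ : ℕ → ℕ}
    (hσ : σ a = b ∧ σ b = a ∨ σ a = a ∧ σ b = b) (hτ : τ a = b ∧ τ b = a ∨ τ a = a ∧ τ b = b)
    (h : ∀ x y, x = a ∨ x = b → y = a ∨ y = b →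
      (FSmooth a b (x :: u ++ [y]) ↔ FSmooth a b (σ x :: v ++ [τ y]))) :
    mult a b u = mult a b v := by
  unfold mult
  rw [h a a (.inl rfl) (.inl rfl), h a b (.inl rfl) (.inr rfl), h b a (.inr rfl) (.inl rfl),
    h b b (.inr rfl) (.inr rfl)]
  rcases hσ with ⟨hσa, hσb⟩ | ⟨hσa, hσb⟩ <;> rcases hτ with ⟨hτa, hτb⟩ | ⟨hτa, hτb⟩ <;>
    rw [hσa, hσb, hτa, hτb] <;> ring

lemma Df_decode (hab : a ≠ b) (hc : c = a ∨ c = b) {l : ℕ} {L : List ℕ}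
    (hpos : ∀ p ∈ l :: L, 1 ≤ p) (hL : L ≠ []) :
    Df a b (decode a b c (l :: L)) = cut a b l ++ L.dropLast ++ cut a b (L.getLast hL) := by
  unfold Df
  rw [exps_decode hab hc hpos]
  cases L with
  | nil => exact absurd rfl hL
  | cons q t => rfl

lemma cf1_decode (hab : a ≠ b) (hc : c = a ∨ c = b) {L : List ℕ} (hpos : ∀ p ∈ L, 1 ≤ p)
    (hle : ∀ p ∈ L, p ≤ b) (hinner : ∀ p ∈ (L.drop 1).dropLast, p = a ∨ p = b) :
    Cf1 a b (decode a b c L) := by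
  refine ⟨fun x hx => mem_decode hc hx, ?_, ?_⟩ <;> rw [exps_decode hab hc hpos] <;> assumption

lemma Pf_eq_decode (hab : a ≠ b) (hc : c = a ∨ c = b) (l : List ℕ) :
    Pf a b c l = decode a b c (a :: (l ++ [a])) := by
  have hdecode : ∀ c, pfAux a b c l = decode a b c (l ++ [a]) := by
    induction l with
    | nil => simp [pfAux]
    | cons p t ih => simp [pfAux, ih]
  rcases hc with rfl | rfl
  · simp [Pf, hdecode]
  · simp [Pf, hab.symm, hdecode, map_flip_decode, flip_right hab]

end Derivative

section Boundary

variable {a b c : ℕ}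

lemma exps_cons_decode (hab : a ≠ b) (hc : c = a ∨ c = b) {x : ℕ} (hx : x = a ∨ x = b)
    {p : ℕ} {t : List ℕ} (hpos : ∀ r ∈ p :: t, 1 ≤ r) :
    exps (x :: decode a b c (p :: t)) = if x = c then (p + 1) :: t else 1 :: p :: t := by
  rw [cons_decode hab hc hx]
  refine exps_decode hab hx fun r hr => ?_
  split_ifs at hr <;> grind

lemma exps_decode_append_singleton (hab : a ≠ b) (hc : c = a ∨ c = b) {y : ℕ}
    (hy : y = a ∨ y = b) {s : List ℕ} {q : ℕ} (hpos : ∀ r ∈ s ++ [q], 1 ≤ r) :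
    exps (decode a b c (s ++ [q]) ++ [y]) =
      s ++ if y = (flip a b)^[s.length] c then [q + 1] else [q, 1] := by
  rw [decode_append_singleton hab hc hy]
  refine exps_decode hab hc fun r hr => ?_
  have := hpos r
  split_ifs at hr <;> grind

lemma eq_of_cf1_cons_decode (hab : a < b) (hc : c = a ∨ c = b) {p : ℕ} {t : List ℕ}
    (hpos : ∀ r ∈ p :: t, 1 ≤ r) (ht : t ≠ [])
    (h : ∀ x, x = a ∨ x = b → Cf1 a b (x :: decode a b c (p :: t))) : p = a := by
  have hb : p + 1 ≤ b := (h c hc).2.1 _ <| by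
    rw [exps_cons_decode hab.ne hc hc hpos, if_pos rfl]; simp
  have hp : p = a ∨ p = b := (h _ (flip_eq_or c)).2.2 _ <| by
    rw [exps_cons_decode hab.ne hc (flip_eq_or c) hpos, if_neg (flip_ne_self hab.ne hc)]
    simp [List.dropLast_cons_of_ne_nil ht]
  omega

lemma eq_of_cf1_decode_append_singleton (hab : a < b) (hc : c = a ∨ c = b) {s : List ℕ}
    {q : ℕ} (hpos : ∀ r ∈ s ++ [q], 1 ≤ r) (hs : s ≠ [])
    (h : ∀ y, y = a ∨ y = b → Cf1 a b (decode a b c (s ++ [q]) ++ [y])) : q = a := by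
  set e := (flip a b)^[s.length] c
  have he : e = a ∨ e = b := iterate_flip_eq_or hc _
  have hb : q + 1 ≤ b := (h e he).2.1 _ <| by
    rw [exps_decode_append_singleton hab.ne hc he hpos, if_pos rfl]; simp
  have hq : q = a ∨ q = b := (h _ (flip_eq_or e)).2.2 _ <| by
    rw [exps_decode_append_singleton hab.ne hc (flip_eq_or e) hpos,
      if_neg (flip_ne_self hab.ne he)]
    obtain ⟨s₀, s, rfl⟩ := List.exists_cons_of_ne_nil hs
    simp [List.dropLast_append_of_ne_nil]
  omega

lemma exps_eq_of_bispecial (hab : a < b) {u : List ℕ} (hbs : Bispecial a b u)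
    (hlong : 2 ≤ (runs u).length) :
    ∃ m, (∀ p ∈ m, p = a ∨ p = b) ∧ exps u = a :: (m ++ [a]) := by
  obtain ⟨hu, hl, hr⟩ := bispecial_iff.mp hbs
  have hcf : Cf1 a b u := hu 0
  obtain ⟨p, m, q, hexps⟩ : ∃ p m q, exps u = p :: (m ++ [q]) := by
    have hlen : 2 ≤ (exps u).length := by simpa [exps] using hlong
    obtain ⟨p, r, hpr⟩ :=
      List.exists_cons_of_ne_nil (List.ne_nil_of_length_pos (l := exps u) (by omega))
    have hr : r ≠ [] := by rintro rfl; simp [hpr] at hlen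
    exact ⟨p, r.dropLast, r.getLast hr, by rw [hpr, List.dropLast_append_getLast]⟩
  have hc := hcf.headI_eq_or (by rintro rfl; simp [runs] at hlong)
  have hdec : decode a b u.headI (p :: (m ++ [q])) = u := hexps ▸ decode_headI_exps hab.ne hcf.1
  have hpos : ∀ r ∈ p :: (m ++ [q]), 1 ≤ r := fun r hr => one_le_of_mem_exps (hexps ▸ hr)
  have hp : p = a := eq_of_cf1_cons_decode hab hc hpos (by simp) fun x hx => by
    rw [hdec]; exact hl x hx 0
  have hq : q = a := eq_of_cf1_decode_append_singleton (s := p :: m) hab hc hpos (by simp)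
    fun y hy => by rw [List.cons_append, hdec]; exact hr y hy 0
  refine ⟨m, fun r hr => hcf.2.2 r ?_, by rw [hexps, hp, hq]⟩
  simp [hexps, hr]

end Boundary

section PrimitiveDecode

variable {a b c : ℕ} (hab : a ≠ b) (hc : c = a ∨ c = b) {m : List ℕ}
include hab hc

lemma cons_Pf {x : ℕ} (hx : x = a ∨ x = b) :
    x :: Pf a b c m =
      decode a b x (if x = c then (a + 1) :: (m ++ [a]) else 1 :: a :: (m ++ [a])) := by
  rw [Pf_eq_decode hab hc, cons_decode hab hc hx]

lemma Pf_append_singleton {y : ℕ} (hy : y = a ∨ y = b) :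
    Pf a b c m ++ [y] = decode a b c
      (a :: (m ++ if y = (flip a b)^[m.length + 1] c then [a + 1] else [a, 1])) := by
  rw [Pf_eq_decode hab hc, ← List.cons_append, decode_append_singleton hab hc hy]
  rfl

lemma cons_Pf_append_singleton {x y : ℕ} (hx : x = a ∨ x = b) (hy : y = a ∨ y = b) :
    x :: Pf a b c m ++ [y] = decode a b x
      (if x = c then (a + 1) :: (m ++ if y = (flip a b)^[m.length + 1] c then [a + 1] else [a, 1])
        else 1 :: a :: (m ++ if y = (flip a b)^[m.length + 1] c then [a + 1] else [a, 1])) := by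
  rw [List.cons_append, Pf_append_singleton hab hc hy, cons_decode hab hc hx]

end PrimitiveDecode

section Primitive

variable {a b c : ℕ} (ha : 1 ≤ a) (hab : a < b) (hc : c = a ∨ c = b) {m : List ℕ}
  (hm : ∀ p ∈ m, p = a ∨ p = b)

include ha hab hm in
lemma one_le_of_eq_or_mem {p : ℕ} (hp : p = 1 ∨ p = a ∨ p = a + 1 ∨ p ∈ m) : 1 ≤ p := by
  have := hm p
  rcases hp with rfl | rfl | rfl | h <;> grind

include ha hab hc hm

lemma Df_Pf : Df a b (Pf a b c m) = m := by
  rw [Pf_eq_decode hab.ne hc,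
    Df_decode hab.ne hc (fun p hp => one_le_of_eq_or_mem ha hab hm (by simp at hp; grind))
      (by simp)]
  simp [cut]

lemma Df_cons_Pf {x : ℕ} (hx : x = a ∨ x = b) :
    Df a b (x :: Pf a b c m) = (if x = c then b else a) :: m := by
  rw [cons_Pf hab.ne hc hx]
  split_ifs <;>
    rw [Df_decode hab.ne hx (fun p hp => one_le_of_eq_or_mem ha hab hm (by simp at hp; grind))
      (by simp)] <;>
    simp [cut, ha, List.dropLast_cons_of_ne_nil]

lemma Df_Pf_append_singleton {y : ℕ} (hy : y = a ∨ y = b) :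
    Df a b (Pf a b c m ++ [y]) = m ++ [if y = (flip a b)^[m.length + 1] c then b else a] := by
  rw [Pf_append_singleton hab.ne hc hy]
  split_ifs <;>
    rw [Df_decode hab.ne hc (fun p hp => one_le_of_eq_or_mem ha hab hm (by simp at hp; grind))
      (by simp)] <;>
    simp [cut, ha, List.dropLast_cons_of_ne_nil]

lemma Df_cons_Pf_append_singleton {x y : ℕ} (hx : x = a ∨ x = b) (hy : y = a ∨ y = b) :
    Df a b (x :: Pf a b c m ++ [y]) =
      (if x = c then b else a) :: m ++ [if y = (flip a b)^[m.length + 1] c then b else a] := by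
  rw [cons_Pf_append_singleton hab.ne hc hx hy]
  split_ifs <;>
    rw [Df_decode hab.ne hx (fun p hp => one_le_of_eq_or_mem ha hab hm (by simp at hp; grind))
      (by simp)] <;>
    simp [cut, ha, List.dropLast_cons_of_ne_nil]

lemma cf1_cons_Pf_append_singleton {x y : ℕ} (hx : x = a ∨ x = b) (hy : y = a ∨ y = b) :
    Cf1 a b (x :: Pf a b c m ++ [y]) := by
  rw [cons_Pf_append_singleton hab.ne hc hx hy]
  refine cf1_decode hab.ne hx (fun p hp => one_le_of_eq_or_mem ha hab hm ?_) (fun p hp => ?_)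
    (fun p hp => ?_) <;> split_ifs at hp <;> simp [List.dropLast_cons_of_ne_nil] at hp <;> grind

lemma bispecial_of_bispecial_Pf (h : Bispecial a b (Pf a b c m)) : Bispecial a b m := by
  obtain ⟨h, hl, hr⟩ := bispecial_iff.mp h
  refine bispecial_iff.mpr
    ⟨Df_Pf ha hab hc hm ▸ (fsmooth_iff.mp h).2, fun z hz => ?_, fun z hz => ?_⟩
  · obtain ⟨x, hx, rfl⟩ := exists_ite_eq hab.ne hc hz
    exact Df_cons_Pf ha hab hc hm hx ▸ (fsmooth_iff.mp (hl x hx)).2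
  · obtain ⟨y, hy, rfl⟩ := exists_ite_eq hab.ne (iterate_flip_eq_or hc (m.length + 1)) hz
    exact Df_Pf_append_singleton ha hab hc hm hy ▸ (fsmooth_iff.mp (hr y hy)).2

lemma mult_Pf : mult a b (Pf a b c m) = mult a b m :=
  mult_eq_of_fsmooth_iff (ite_eq_swap_or_id hab.ne hc)
    (ite_eq_swap_or_id hab.ne (iterate_flip_eq_or hc _)) fun x y hx hy => by
      rw [fsmooth_iff, Df_cons_Pf_append_singleton ha hab hc hm hx hy,
        and_iff_right (cf1_cons_Pf_append_singleton ha hab hc hm hx hy)]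

end Primitive

theorem stmt6 (a b : ℕ) (ha : 1 ≤ a) (hab : a < b) (u : List ℕ)
    (hbs : Bispecial a b u) (hlong : 2 ≤ (runs u).length) :
    (exps u).head? = some a ∧ (exps u).getLast? = some a ∧
    u = Pf a b u.headI (Df a b u) ∧
    Bispecial a b (Df a b u) ∧ mult a b (Df a b u) = mult a b u := by
  obtain ⟨m, hm, hexps⟩ := exps_eq_of_bispecial hab hbs hlong
  have hcf : Cf1 a b u := hbs.1 0
  have hc := hcf.headI_eq_or (by rintro rfl; simp [runs] at hlong)
  have hu : u = Pf a b u.headI m := by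
    rw [Pf_eq_decode hab.ne hc, ← hexps, decode_headI_exps hab.ne hcf.1]
  generalize u.headI = c at hu hc ⊢
  subst hu
  rw [Df_Pf ha hab hc hm]
  exact ⟨by simp [hexps], by rw [hexps, ← List.cons_append, List.getLast?_concat], rfl,
    bispecial_of_bispecial_Pf ha hab hc hm hbs, (mult_Pf ha hab hc hm).symm⟩

end SmoothWords
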